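/- Optimal subset selection for the simplified problem: Given real numbers τ₁*, …, τ_N* and 1 ≤ k ≤ N, a subset ℛ ⊂ {1,…,N} with #ℛ = k minimizing min_τ Σ_{r∈ℛ}|τ_r* − τ|² (equivalently, minimizing the within-subset variance times k) can always be chosen to be 'contiguous' in sorted order: there exists an optimal ℛ whose elements are k consecutive values of the sorted sequence τ_{(1)} ≤ … ≤ τ_{(N)}. -/
import Mathlib


open Finset

noncomputable def ossObj {N : ℕ} (τs : Fin N → ℝ) (S : Finset (Fin N)) : ℝ :=
  ∑ r ∈ S, (τs r - (∑ j ∈ S, τs j) / S.card) ^ 2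

lemma ossObj_eq {N : ℕ} (τs : Fin N → ℝ) (S : Finset (Fin N)) (hS : S.Nonempty) :
    ossObj τs S = (∑ r ∈ S, (τs r) ^ 2) - (∑ r ∈ S, τs r) ^ 2 / S.card := by
  have hc : (0 : ℝ) < S.card := by exact_mod_cast Finset.card_pos.mpr hS
  have hc' : (S.card : ℝ) ≠ 0 := ne_of_gt hc
  unfold ossObj
  have hexp : ∀ r ∈ S, (τs r - (∑ j ∈ S, τs j) / S.card) ^ 2
      = (τs r) ^ 2 - (2 * ((∑ j ∈ S, τs j) / S.card)) * τs r
        + ((∑ j ∈ S, τs j) / S.card) ^ 2 := by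
    intro r _; ring
  rw [Finset.sum_congr rfl hexp]
  rw [Finset.sum_add_distrib, Finset.sum_sub_distrib, ← Finset.mul_sum,
    Finset.sum_const, nsmul_eq_mul]
  field_simp
  ring

/-- Exchange lemma: replacing `y` by `x` in `insert y T` does not increase the
objective, provided `(τx - τy) * (|T| (τx + τy) - 2 Σ_T τ) ≤ 0`. -/
lemma ossObj_swap {N : ℕ} (τs : Fin N → ℝ) (T : Finset (Fin N)) (x y : Fin N)
    (hx : x ∉ T) (hy : y ∉ T)
    (hkey : (τs x - τs y) * ((T.card : ℝ) * (τs x + τs y) - 2 * ∑ j ∈ T, τs j) ≤ 0) :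
    ossObj τs (insert x T) ≤ ossObj τs (insert y T) := by
  rw [ossObj_eq _ _ (Finset.insert_nonempty _ _), ossObj_eq _ _ (Finset.insert_nonempty _ _),
    Finset.sum_insert hx, Finset.sum_insert hy, Finset.sum_insert hx, Finset.sum_insert hy,
    Finset.card_insert_of_notMem hx, Finset.card_insert_of_notMem hy]
  set P := ∑ j ∈ T, τs j with hP
  set n := (T.card : ℝ) with hn
  have hn0 : (0 : ℝ) ≤ n := by positivity
  have hn1 : (0 : ℝ) < n + 1 := by linarith
  push_cast
  have h1 : ((τs x + P) ^ 2 - (τs y + P) ^ 2) / (n + 1) ≥ (τs x) ^ 2 - (τs y) ^ 2 := by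
    rw [ge_iff_le, le_div_iff₀ hn1]
    nlinarith [hkey]
  have h2 : ((τs x + P) ^ 2 - (τs y + P) ^ 2) / (n + 1)
      = (τs x + P) ^ 2 / (n + 1) - (τs y + P) ^ 2 / (n + 1) := by
    rw [sub_div]
  linarith [h1, h2.symm.le, h2.le]

/-- Main exchange/induction lemma: every `k`-subset is dominated by a contiguous one. -/
lemma ossObj_toWindow {N : ℕ} (τs : Fin N → ℝ) (hsort : Monotone τs) (k : ℕ) (hk1 : 1 ≤ k) :
    ∀ d : ℕ, ∀ S : Finset (Fin N), S.card = k →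
      (∀ i ∈ S, ∀ j ∈ S, (i : ℕ) - (j : ℕ) ≤ d) →
      ∃ W : Finset (Fin N), W.card = k ∧
        (∃ a : ℕ, ∀ i : Fin N, i ∈ W ↔ a ≤ (i : ℕ) ∧ (i : ℕ) < a + k) ∧
        ossObj τs W ≤ ossObj τs S := by
  intro d
  induction d using Nat.strong_induction_on with
  | _ d ih =>
    intro S hcard hbound
    have hne : S.Nonempty := Finset.card_pos.mp (by omega)
    set m := S.min' hne with hm
    set M := S.max' hne with hM
    have hmem_m : m ∈ S := S.min'_mem hne
    have hmem_M : M ∈ S := S.max'_mem hne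
    have hmM : m ≤ M := S.min'_le _ hmem_M
    have hsub : S ⊆ Finset.Icc m M := by
      intro i hi
      exact Finset.mem_Icc.mpr ⟨S.min'_le _ hi, S.le_max' _ hi⟩
    have hcardIcc : (Finset.Icc m M).card = (M : ℕ) + 1 - (m : ℕ) := Fin.card_Icc m M
    by_cases h : (M : ℕ) < (m : ℕ) + k
    · -- S is already a window
      have hle : (Finset.Icc m M).card ≤ S.card := by
        rw [hcardIcc, hcard]
        have : (m : ℕ) ≤ (M : ℕ) := hmM
        omega
      have hSeq : S = Finset.Icc m M := Finset.eq_of_subset_of_card_le hsub hle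
      have hMval : (M : ℕ) + 1 - (m : ℕ) = k := by
        rw [← hcardIcc, ← hSeq, hcard]
      refine ⟨S, hcard, ⟨(m : ℕ), ?_⟩, le_refl _⟩
      intro i
      rw [hSeq, Finset.mem_Icc]
      constructor
      · rintro ⟨h1, h2⟩
        have h1' : (m : ℕ) ≤ (i : ℕ) := h1
        have h2' : (i : ℕ) ≤ (M : ℕ) := h2
        have : (m : ℕ) ≤ (M : ℕ) := hmM
        exact ⟨h1', by omega⟩
      · rintro ⟨h1, h2⟩
        have : (m : ℕ) ≤ (M : ℕ) := hmM
        refine ⟨h1, ?_⟩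
        show (i : ℕ) ≤ (M : ℕ)
        omega
    · -- there is a gap; perform an exchange
      push_neg at h
      have hmMlt : (m : ℕ) < (M : ℕ) := by omega
      have hcardlt : S.card < (Finset.Icc m M).card := by
        rw [hcard, hcardIcc]; omega
      have hbne : (Finset.Icc m M \ S).Nonempty := by
        rw [Finset.sdiff_nonempty]
        intro hcon
        exact absurd (Finset.card_le_card hcon) (not_le.mpr hcardlt)
      obtain ⟨b, hbmem⟩ := hbne
      rw [Finset.mem_sdiff, Finset.mem_Icc] at hbmem
      obtain ⟨⟨hmb, hbM⟩, hbS⟩ := hbmem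
      have hbnm : b ≠ m := fun hcon => hbS (hcon ▸ hmem_m)
      have hbnM : b ≠ M := fun hcon => hbS (hcon ▸ hmem_M)
      have hmb' : m < b := lt_of_le_of_ne hmb (Ne.symm hbnm)
      have hbM' : b < M := lt_of_le_of_ne hbM hbnM
      have hτmb : τs m ≤ τs b := hsort hmb
      have hτbM : τs b ≤ τs M := hsort hbM
      have hd1 : (M : ℕ) - (m : ℕ) ≤ d := hbound M hmem_M m hmem_m
      have hdpos : 1 ≤ d := by omega
      -- sums over the two candidate "body" sets
      set T1 := S.erase M with hT1
      set T2 := S.erase m with hT2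
      have hbT1 : b ∉ T1 := fun hcon => hbS (Finset.mem_of_mem_erase hcon)
      have hbT2 : b ∉ T2 := fun hcon => hbS (Finset.mem_of_mem_erase hcon)
      have hMT1 : M ∉ T1 := Finset.notMem_erase _ _
      have hmT2 : m ∉ T2 := Finset.notMem_erase _ _
      have hcT1 : T1.card = k - 1 := by rw [hT1, Finset.card_erase_of_mem hmem_M, hcard]
      have hcT2 : T2.card = k - 1 := by rw [hT2, Finset.card_erase_of_mem hmem_m, hcard]
      have hsum1 : ∑ j ∈ T1, τs j + τs M = ∑ j ∈ S, τs j :=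
        Finset.sum_erase_add S τs hmem_M
      have hsum2 : ∑ j ∈ T2, τs j + τs m = ∑ j ∈ S, τs j :=
        Finset.sum_erase_add S τs hmem_m
      have hins1 : insert M T1 = S := Finset.insert_erase hmem_M
      have hins2 : insert m T2 = S := Finset.insert_erase hmem_m
      by_cases hP : 2 * ∑ j ∈ T1, τs j ≤ (T1.card : ℝ) * (τs b + τs M)
      · -- replace M by b
        set S' := insert b T1 with hS'
        have hcard' : S'.card = k := by
          rw [hS', Finset.card_insert_of_notMem hbT1, hcT1]; omega
        have hstep : ossObj τs S' ≤ ossObj τs S := by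
          rw [← hins1]
          apply ossObj_swap τs T1 b M hbT1 hMT1
          have h1 : τs b - τs M ≤ 0 := by linarith
          have h2 : 0 ≤ (T1.card : ℝ) * (τs b + τs M) - 2 * ∑ j ∈ T1, τs j := by linarith
          exact mul_nonpos_of_nonpos_of_nonneg h1 h2
        have hbound' : ∀ i ∈ S', ∀ j ∈ S', (i : ℕ) - (j : ℕ) ≤ d - 1 := by
          intro i hi j hj
          have hiS : (i : ℕ) ≤ (M : ℕ) - 1 := by
            rcases Finset.mem_insert.mp hi with h' | h'
            · subst h'
              have : (i : ℕ) < (M : ℕ) := hbM'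
              omega
            · have hiM : i ≤ M := S.le_max' _ (Finset.mem_of_mem_erase h')
              have hiM' : i ≠ M := Finset.ne_of_mem_erase h'
              have : (i : ℕ) < (M : ℕ) :=
                lt_of_le_of_ne hiM (by simpa [Fin.ext_iff] using hiM')
              omega
          have hjS : (m : ℕ) ≤ (j : ℕ) := by
            rcases Finset.mem_insert.mp hj with h' | h'
            · subst h'; exact le_of_lt hmb'
            · exact S.min'_le _ (Finset.mem_of_mem_erase h')
          omega
        obtain ⟨W, hWc, hWwin, hWle⟩ := ih (d - 1) (by omega) S' hcard' hbound'
        exact ⟨W, hWc, hWwin, le_trans hWle hstep⟩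
      · -- replace m by b
        push_neg at hP
        set S' := insert b T2 with hS'
        have hcard' : S'.card = k := by
          rw [hS', Finset.card_insert_of_notMem hbT2, hcT2]; omega
        have hstep : ossObj τs S' ≤ ossObj τs S := by
          rw [← hins2]
          apply ossObj_swap τs T2 b m hbT2 hmT2
          have hcc : (T2.card : ℝ) = (T1.card : ℝ) := by rw [hcT1, hcT2]
          have hcnn : (0 : ℝ) ≤ (T1.card : ℝ) := by positivity
          have h1 : 0 ≤ τs b - τs m := by linarith
          have hP2 : (T1.card : ℝ) * (2 * τs b) ≤ 2 * ∑ j ∈ T1, τs j := by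
            nlinarith [hP, mul_le_mul_of_nonneg_left hτbM hcnn]
          have h2 : (T2.card : ℝ) * (τs b + τs m) - 2 * ∑ j ∈ T2, τs j ≤ 0 := by
            rw [hcc]
            have hmono : (T1.card : ℝ) * (τs b + τs m) ≤ (T1.card : ℝ) * (2 * τs b) := by
              apply mul_le_mul_of_nonneg_left _ hcnn
              linarith
            have hsum12 : ∑ j ∈ T2, τs j = ∑ j ∈ T1, τs j + τs M - τs m := by
              linarith [hsum1, hsum2]
            have hτmM : τs m ≤ τs M := hsort (le_of_lt (lt_trans hmb' hbM'))
            rw [hsum12]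
            linarith
          nlinarith [mul_nonneg h1 (neg_nonneg.mpr h2)]
        have hbound' : ∀ i ∈ S', ∀ j ∈ S', (i : ℕ) - (j : ℕ) ≤ d - 1 := by
          intro i hi j hj
          have hiS : (i : ℕ) ≤ (M : ℕ) := by
            rcases Finset.mem_insert.mp hi with h' | h'
            · subst h'; exact le_of_lt hbM'
            · exact S.le_max' _ (Finset.mem_of_mem_erase h')
          have hjS : (m : ℕ) + 1 ≤ (j : ℕ) := by
            rcases Finset.mem_insert.mp hj with h' | h'
            · subst h'
              have : (m : ℕ) < (j : ℕ) := hmb'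
              omega
            · have hjm : m ≤ j := S.min'_le _ (Finset.mem_of_mem_erase h')
              have hjm' : j ≠ m := Finset.ne_of_mem_erase h'
              have : (m : ℕ) < (j : ℕ) :=
                lt_of_le_of_ne hjm (by simpa [Fin.ext_iff, eq_comm] using hjm')
              omega
          omega
        obtain ⟨W, hWc, hWwin, hWle⟩ := ih (d - 1) (by omega) S' hcard' hbound'
        exact ⟨W, hWc, hWwin, le_trans hWle hstep⟩

/-- Optimal subset selection for the simplified problem: given sorted values
`τ_{(1)} ≤ … ≤ τ_{(N)}` and `1 ≤ k ≤ N`, among all `k`-element subsets there is one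
minimizing the sum of squared deviations from the subset mean that consists of `k`
consecutive order statistics. -/
theorem optimal_subset_contiguous (N k : ℕ) (hk1 : 1 ≤ k) (hkN : k ≤ N)
    (τs : Fin N → ℝ) (hsort : Monotone τs) :
    ∃ ℛ : Finset (Fin N), ℛ.card = k ∧
      (∃ a : ℕ, ∀ i : Fin N, i ∈ ℛ ↔ a ≤ (i : ℕ) ∧ (i : ℕ) < a + k) ∧
      ∀ S : Finset (Fin N), S.card = k →
        (∑ r ∈ ℛ, (τs r - (∑ j ∈ ℛ, τs j) / ℛ.card) ^ 2) ≤
          ∑ r ∈ S, (τs r - (∑ j ∈ S, τs j) / S.card) ^ 2 := by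
  classical
  -- windows
  set win : ℕ → Finset (Fin N) :=
    fun a => Finset.univ.filter (fun i => a ≤ (i : ℕ) ∧ (i : ℕ) < a + k) with hwin
  have hwinmem : ∀ a (i : Fin N), i ∈ win a ↔ a ≤ (i : ℕ) ∧ (i : ℕ) < a + k := by
    intro a i; simp [hwin]
  have hwincard : ∀ a, a + k ≤ N → (win a).card = k := by
    intro a ha
    have hlt : ∀ x ∈ Finset.Ico a (a + k), x < N := by
      intro x hx
      have := (Finset.mem_Ico.mp hx).2
      omega
    have : win a = Finset.attachFin (Finset.Ico a (a + k)) hlt := by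
      ext i
      rw [hwinmem, Finset.mem_attachFin, Finset.mem_Ico]
    rw [this, Finset.card_attachFin, Nat.card_Ico]
    omega
  obtain ⟨a0, ha0mem, ha0min⟩ := Finset.exists_min_image (Finset.range (N - k + 1))
    (fun a => ossObj τs (win a)) ⟨0, Finset.mem_range.mpr (by omega)⟩
  have ha0 : a0 + k ≤ N := by
    have := Finset.mem_range.mp ha0mem
    omega
  refine ⟨win a0, hwincard a0 ha0, ⟨a0, hwinmem a0⟩, ?_⟩
  intro S hS
  have hbound : ∀ i ∈ S, ∀ j ∈ S, (i : ℕ) - (j : ℕ) ≤ N := by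
    intro i _ j _
    have := i.isLt
    omega
  obtain ⟨W, hWc, ⟨a, hWa⟩, hWle⟩ := ossObj_toWindow τs hsort k hk1 N S hS hbound
  -- W is exactly `win a`, and `a + k ≤ N`
  have haN : a + k ≤ N := by
    have hWsub : W ⊆ Finset.attachFin (Finset.Ico a N)
        (fun x hx => (Finset.mem_Ico.mp hx).2) := by
      intro i hi
      rw [Finset.mem_attachFin, Finset.mem_Ico]
      exact ⟨((hWa i).mp hi).1, i.isLt⟩
    have := Finset.card_le_card hWsub
    rw [hWc, Finset.card_attachFin, Nat.card_Ico] at this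
    omega
  have hWeq : W = win a := by
    ext i
    rw [hWa, hwinmem]
  have hfin : ossObj τs (win a0) ≤ ossObj τs (win a) :=
    ha0min a (Finset.mem_range.mpr (by omega))
  have : ossObj τs (win a0) ≤ ossObj τs S := le_trans hfin (hWeq ▸ hWle)
  exact this
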